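/- arXiv:2510.04430 — 5 statements merged into one kernel-verified Lean document; each statement's English description precedes it below -/
import Mathlib

section
/- Let Δ > 0 and let π ∈ Π satisfy π(a|s) ≥ 2Δ for all s ∈ S and a ∈ A. Then for every vector g ∈ ℝ^{S×A}: max_{π₂ ∈ Π} ⟨g, π₂ − π⟩ ≤ 2 · max_{π̃ ∈ Π_Δ} ⟨g, π̃ − π⟩. (In particular, for every π₂ ∈ Π the midpoint (π₂ + π)/2 belongs to Π_Δ.) -/
open Finset

/-- If `π ∈ Π` has all entries at least `2Δ`, then for every `π₂ ∈ Π` the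
midpoint `(π₂ + π)/2` lies in `Π_Δ`, and consequently the stationarity measure on the
whole policy space `Π` is at most twice the stationarity measure on `Π_Δ`:
`max_{π₂ ∈ Π} ⟨g, π₂ − π⟩ ≤ 2 max_{π̃ ∈ Π_Δ} ⟨g, π̃ − π⟩`. -/
theorem stationarity_measures_bound
    {S A : Type*} [Fintype S] [Fintype A] [Nonempty S] [Nonempty A]
    (Δ : ℝ) (hΔ : 0 < Δ) (π : S → A → ℝ)
    (hπ0 : ∀ s a, 0 ≤ π s a) (hπ1 : ∀ s, ∑ a, π s a = 1)
    (hπΔ : ∀ s a, 2 * Δ ≤ π s a) (g : S → A → ℝ) :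
    -- the midpoint belongs to Π_Δ :
    (∀ π₂ : S → A → ℝ, (∀ s a, 0 ≤ π₂ s a) → (∀ s, ∑ a, π₂ s a = 1) →
      ((∀ s a, 0 ≤ (π₂ s a + π s a) / 2) ∧ (∀ s, ∑ a, (π₂ s a + π s a) / 2 = 1) ∧
        (∀ s a, Δ ≤ (π₂ s a + π s a) / 2))) ∧
    -- max over Π is at most twice the max over Π_Δ :
    sSup {x : ℝ | ∃ π₂ : S → A → ℝ, (∀ s a, 0 ≤ π₂ s a) ∧ (∀ s, ∑ a, π₂ s a = 1) ∧
        x = ∑ s, ∑ a, g s a * (π₂ s a - π s a)} ≤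
      2 * sSup {x : ℝ | ∃ πt : S → A → ℝ, (∀ s a, 0 ≤ πt s a) ∧ (∀ s, ∑ a, πt s a = 1) ∧
        (∀ s a, Δ ≤ πt s a) ∧ x = ∑ s, ∑ a, g s a * (πt s a - π s a)} := by
  have hmid : ∀ π₂ : S → A → ℝ, (∀ s a, 0 ≤ π₂ s a) → (∀ s, ∑ a, π₂ s a = 1) →
      ((∀ s a, 0 ≤ (π₂ s a + π s a) / 2) ∧ (∀ s, ∑ a, (π₂ s a + π s a) / 2 = 1) ∧
        (∀ s a, Δ ≤ (π₂ s a + π s a) / 2)) := by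
    intro π₂ h0 h1
    refine ⟨fun s a => by have := h0 s a; have := hπ0 s a; linarith, fun s => ?_, fun s a => ?_⟩
    · rw [← Finset.sum_div, Finset.sum_add_distrib, h1 s, hπ1 s]; norm_num
    · have := hπΔ s a
      have := h0 s a
      linarith
  refine ⟨hmid, ?_⟩
  set T : Set ℝ := {x : ℝ | ∃ πt : S → A → ℝ, (∀ s a, 0 ≤ πt s a) ∧ (∀ s, ∑ a, πt s a = 1) ∧
        (∀ s a, Δ ≤ πt s a) ∧ x = ∑ s, ∑ a, g s a * (πt s a - π s a)} with hT
  have hTbdd : BddAbove T := by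
    refine ⟨∑ s, ∑ a, |g s a|, fun x hx => ?_⟩
    obtain ⟨πt, h0, h1, _, hxe⟩ := hx
    rw [hxe]
    refine Finset.sum_le_sum fun s _ => Finset.sum_le_sum fun a _ => ?_
    have hbound : |πt s a - π s a| ≤ 1 := by
      have h2 : πt s a ≤ 1 := by
        have := Finset.single_le_sum (f := fun a => πt s a) (fun i _ => h0 s i)
          (Finset.mem_univ a)
        linarith [h1 s]
      have h3 : π s a ≤ 1 := by
        have := Finset.single_le_sum (f := fun a => π s a) (fun i _ => hπ0 s i)
          (Finset.mem_univ a)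
        linarith [hπ1 s]
      rw [abs_le]
      constructor <;> [linarith [h0 s a]; linarith [hπ0 s a]]
    calc g s a * (πt s a - π s a) ≤ |g s a * (πt s a - π s a)| := le_abs_self _
      _ = |g s a| * |πt s a - π s a| := abs_mul _ _
      _ ≤ |g s a| * 1 := by
          exact mul_le_mul_of_nonneg_left hbound (abs_nonneg _)
      _ = |g s a| := mul_one _
  have hT0 : (0 : ℝ) ∈ T := by
    refine ⟨π, hπ0, hπ1, fun s a => le_trans (by linarith) (hπΔ s a), ?_⟩
    simp
  have hTsup : 0 ≤ sSup T := le_csSup hTbdd hT0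
  refine Real.sSup_le (fun x hx => ?_) (by linarith)
  obtain ⟨π₂, h0, h1, hxe⟩ := hx
  have hmem : x / 2 ∈ T := by
    obtain ⟨m0, m1, mΔ⟩ := hmid π₂ h0 h1
    refine ⟨fun s a => (π₂ s a + π s a) / 2, m0, m1, mΔ, ?_⟩
    rw [hxe, Finset.sum_div]
    refine Finset.sum_congr rfl fun s _ => ?_
    rw [Finset.sum_div]
    refine Finset.sum_congr rfl fun a _ => ?_
    ring
  have := le_csSup hTbdd hmem
  linarith
end

section
/- Let d, d' : S → ℝ be nonnegative with Σ_s d'(s) = 1, and let π, π' ∈ Π. Then Σ_{s,a} |d'(s) π'(a|s) − d(s) π(a|s)| ≤ max_{s} Σ_a |π'(a|s) − π(a|s)| + Σ_s |d'(s) − d(s)|. -/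
open Finset

/-! Split `d' π' − d π = d' (π' − π) + (d' − d) π` state by state. Since `d' ≥ 0` and `π(·|s)` is a
probability vector, state `s` contributes at most `d'(s) ‖π'(·|s) − π(·|s)‖₁ + |d'(s) − d(s)|`;
bounding the policy distance by its maximum and summing with `Σ d' = 1` gives the claim. -/

lemma abs_mul_sub_mul_le_of_nonneg {c c' x x' : ℝ} (hc' : 0 ≤ c') (hx : 0 ≤ x) :
    |c' * x' - c * x| ≤ c' * |x' - x| + |c' - c| * x :=
  calc |c' * x' - c * x| = |c' * (x' - x) + (c' - c) * x| := by ring_nf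
    _ ≤ |c' * (x' - x)| + |(c' - c) * x| := abs_add_le _ _
    _ = c' * |x' - x| + |c' - c| * x := by
      rw [abs_mul, abs_mul, abs_of_nonneg hc', abs_of_nonneg hx]

lemma sum_abs_mul_sub_mul_le {ι : Type*} [Fintype ι] {c c' : ℝ} {p p' : ι → ℝ}
    (hc' : 0 ≤ c') (hp0 : ∀ i, 0 ≤ p i) (hp1 : ∑ i, p i = 1) :
    ∑ i, |c' * p' i - c * p i| ≤ c' * ∑ i, |p' i - p i| + |c' - c| :=
  calc ∑ i, |c' * p' i - c * p i| ≤ ∑ i, (c' * |p' i - p i| + |c' - c| * p i) :=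
        sum_le_sum fun i _ => abs_mul_sub_mul_le_of_nonneg hc' (hp0 i)
    _ = c' * ∑ i, |p' i - p i| + |c' - c| := by
      rw [sum_add_distrib, ← mul_sum, ← mul_sum, hp1, mul_one]

theorem occupancy_product_l1_bound_general
    {S A : Type*} [Fintype S] [Fintype A] [Nonempty S]
    (d d' : S → ℝ) (hd'0 : ∀ s, 0 ≤ d' s)
    (hd'1 : ∑ s, d' s = 1)
    (π π' : S → A → ℝ)
    (hπ0 : ∀ s a, 0 ≤ π s a) (hπ1 : ∀ s, ∑ a, π s a = 1) :
    ∑ s, ∑ a, |d' s * π' s a - d s * π s a| ≤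
      (univ.sup' univ_nonempty fun s => ∑ a, |π' s a - π s a|) +
        ∑ s, |d' s - d s| := by
  set M := univ.sup' univ_nonempty fun s => ∑ a, |π' s a - π s a|
  have hM : ∀ s, ∑ a, |π' s a - π s a| ≤ M := fun s =>
    le_sup' (fun s => ∑ a, |π' s a - π s a|) (mem_univ s)
  calc ∑ s, ∑ a, |d' s * π' s a - d s * π s a|
      ≤ ∑ s, (d' s * M + |d' s - d s|) := sum_le_sum fun s _ =>
        (sum_abs_mul_sub_mul_le (hd'0 s) (hπ0 s) (hπ1 s)).trans
          (by gcongr; exacts [hd'0 s, hM s])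
    _ = M + ∑ s, |d' s - d s| := by
      rw [sum_add_distrib, ← sum_mul, hd'1, one_mul]

/-- for nonnegative `d, d'` with `Σ_s d'(s) = 1` and policies `π, π'`,
`Σ_{s,a} |d'(s)π'(a|s) − d(s)π(a|s)| ≤ max_s Σ_a |π'(a|s) − π(a|s)| + Σ_s |d'(s) − d(s)|`. -/
theorem occupancy_product_l1_bound
    {S A : Type*} [Fintype S] [Fintype A] [Nonempty S] [Nonempty A]
    (d d' : S → ℝ) (hd0 : ∀ s, 0 ≤ d s) (hd'0 : ∀ s, 0 ≤ d' s)
    (hd'1 : ∑ s, d' s = 1)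
    (π π' : S → A → ℝ)
    (hπ0 : ∀ s a, 0 ≤ π s a) (hπ1 : ∀ s, ∑ a, π s a = 1)
    (hπ'0 : ∀ s a, 0 ≤ π' s a) (hπ'1 : ∀ s, ∑ a, π' s a = 1) :
    ∑ s, ∑ a, |d' s * π' s a - d s * π s a| ≤
      (univ.sup' univ_nonempty fun s => ∑ a, |π' s a - π s a|) +
        ∑ s, |d' s - d s| :=
  occupancy_product_l1_bound_general d d' hd'0 hd'1 π π' hπ0 hπ1
end

section
/- Let d₀, d₁ : S × A → ℝ be strictly positive, and for i ∈ {0,1} set d_i(s) = Σ_a d_i(s,a) and π_i(a|s) = d_i(s,a)/d_i(s). For α ∈ [0,1] set d_α = α d₁ + (1−α) d₀, d_α(s) = Σ_a d_α(s,a), π_α(a|s) = d_α(s,a)/d_α(s), and define H(d) = Σ_{s,a} d(s,a) log(d(s,a)/d(s)). Then α H(d₁) + (1−α) H(d₀) − H(d_α) = Σ_s [ α d₁(s) KL(π₁(·|s) ‖ π_α(·|s)) + (1−α) d₀(s) KL(π₀(·|s) ‖ π_α(·|s)) ], where KL(p ‖ q) = Σ_a p(a) log(p(a)/q(a)). -/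
open Finset

lemma aux_pt (x y X Y Z a : ℝ) (hx : 0 < x) (hy : 0 < y) (hX : 0 < X) (hY : 0 < Y)
    (hZ : 0 < Z) (hz : 0 < a * x + (1 - a) * y) :
    a * (x * Real.log (x / X)) + (1 - a) * (y * Real.log (y / Y)) -
      (a * x + (1 - a) * y) * Real.log ((a * x + (1 - a) * y) / Z) =
    a * X * (x / X * Real.log (x / X / ((a * x + (1 - a) * y) / Z))) +
      (1 - a) * Y * (y / Y * Real.log (y / Y / ((a * x + (1 - a) * y) / Z))) := by
  rw [Real.log_div (div_pos hx hX).ne' (div_pos hz hZ).ne',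
      Real.log_div (div_pos hy hY).ne' (div_pos hz hZ).ne',
      Real.log_div hx.ne' hX.ne', Real.log_div hy.ne' hY.ne', Real.log_div hz.ne' hZ.ne']
  field_simp
  ring

/-- decomposition of the entropy-type function
`H(d) = Σ_{s,a} d(s,a) log(d(s,a)/d(s))` along a convex combination of strictly positive
occupancy measures, in terms of KL divergences of the conditional policies:
`α H(d₁) + (1−α) H(d₀) − H(d_α)
  = Σ_s [α d₁(s) KL(π₁(·|s)‖π_α(·|s)) + (1−α) d₀(s) KL(π₀(·|s)‖π_α(·|s))]`,
where `d_α = α d₁ + (1−α) d₀`, `d_i(s) = Σ_a d_i(s,a)` and `π_i(a|s) = d_i(s,a)/d_i(s)`. -/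
theorem entropy_convex_combination_kl_identity
    {S A : Type*} [Fintype S] [Fintype A] [Nonempty S] [Nonempty A]
    (d₀ d₁ : S → A → ℝ) (hd₀ : ∀ s a, 0 < d₀ s a) (hd₁ : ∀ s a, 0 < d₁ s a)
    (α : ℝ) (hα0 : 0 ≤ α) (hα1 : α ≤ 1)
    (dα : S → A → ℝ) (hdα : ∀ s a, dα s a = α * d₁ s a + (1 - α) * d₀ s a)
    (π₀ π₁ πα : S → A → ℝ)
    (hπ₀ : ∀ s a, π₀ s a = d₀ s a / ∑ a', d₀ s a')
    (hπ₁ : ∀ s a, π₁ s a = d₁ s a / ∑ a', d₁ s a')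
    (hπα : ∀ s a, πα s a = dα s a / ∑ a', dα s a')
    (H : (S → A → ℝ) → ℝ)
    (hH : ∀ d : S → A → ℝ, H d = ∑ s, ∑ a, d s a * Real.log (d s a / ∑ a', d s a')) :
    α * H d₁ + (1 - α) * H d₀ - H dα =
      ∑ s, (α * (∑ a, d₁ s a) * (∑ a, π₁ s a * Real.log (π₁ s a / πα s a)) +
            (1 - α) * (∑ a, d₀ s a) * (∑ a, π₀ s a * Real.log (π₀ s a / πα s a))) := by
  have hdαpos : ∀ s a, 0 < dα s a := by
    intro s a
    rw [hdα]
    rcases eq_or_lt_of_le hα0 with h | h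
    · simp [← h, hd₀ s a]
    · exact add_pos_of_pos_of_nonneg (mul_pos h (hd₁ s a))
        (mul_nonneg (by linarith) (hd₀ s a).le)
  have hD₀ : ∀ s, 0 < ∑ a', d₀ s a' := fun s =>
    Finset.sum_pos (fun a _ => hd₀ s a) Finset.univ_nonempty
  have hD₁ : ∀ s, 0 < ∑ a', d₁ s a' := fun s =>
    Finset.sum_pos (fun a _ => hd₁ s a) Finset.univ_nonempty
  have hDα : ∀ s, 0 < ∑ a', dα s a' := fun s =>
    Finset.sum_pos (fun a _ => hdαpos s a) Finset.univ_nonempty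
  rw [hH, hH, hH, Finset.mul_sum, Finset.mul_sum, ← Finset.sum_add_distrib,
      ← Finset.sum_sub_distrib]
  refine Finset.sum_congr rfl fun s _ => ?_
  rw [Finset.mul_sum univ (fun a => π₁ s a * Real.log (π₁ s a / πα s a)) (α * ∑ a, d₁ s a),
      Finset.mul_sum univ (fun a => π₀ s a * Real.log (π₀ s a / πα s a))
        ((1 - α) * ∑ a, d₀ s a),
      Finset.mul_sum univ (fun a => d₁ s a * Real.log (d₁ s a / ∑ a', d₁ s a')) α,
      Finset.mul_sum univ (fun a => d₀ s a * Real.log (d₀ s a / ∑ a', d₀ s a')) (1 - α),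
      ← Finset.sum_add_distrib, ← Finset.sum_sub_distrib, ← Finset.sum_add_distrib]
  refine Finset.sum_congr rfl fun a _ => ?_
  simp only [hπ₀, hπ₁, hπα, hdα s a]
  exact aux_pt (d₁ s a) (d₀ s a) (∑ a', d₁ s a') (∑ a', d₀ s a') (∑ a', dα s a') α
    (hd₁ s a) (hd₀ s a) (hD₁ s) (hD₀ s) (hDα s) (by rw [← hdα]; exact hdαpos s a)
end

section
/- Let D > 0 and let d₀, d₁ : S × A → ℝ be strictly positive with state marginals d_i(s) = Σ_a d_i(s,a) ≥ D for all s and i ∈ {0,1}. Set π_i(a|s) = d_i(s,a)/d_i(s); for α ∈ [0,1] set d_α = α d₁ + (1−α) d₀ and define H(d) = Σ_{s,a} d(s,a) log(d(s,a)/d(s)) with d(s) = Σ_a d(s,a). Then α H(d₁) + (1−α) H(d₀) − H(d_α) ≥ (D α (1−α)/2) Σ_{s,a} (π₁(a|s) − π₀(a|s))² = (D α (1−α)/2) ‖π₁ − π₀‖². -/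
/-!
Fix a state and write `X, Y, Z` for the marginals of `d₁, d₀, d_α` and `q` for the conditional
of `d_α`. The convexity gap of `H` at that state is `α X KL(π₁‖q) + (1 - α) Y KL(π₀‖q)`, and
`q` is the convex combination of `π₁, π₀` with weight `α X / Z` on `π₁`, so
`π₁ - q = ((1 - α) Y / Z) (π₁ - π₀)` and `π₀ - q = -(α X / Z) (π₁ - π₀)`. For probability
vectors with positive entries `KL(p‖q) ≥ ½ ‖p - q‖²`, by summing the pointwise inequality
`x log (x / y) - x + y ≥ (x - y)² / 2` on `(0, 1]`. Hence the gap is at least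
`½ α (1 - α) (X Y / Z) ‖π₁ - π₀‖²`, and `X Y / Z ≥ D` because `X, Y ≥ D`.
-/

open Finset

section

open Real

lemma hasDerivAt_mul_log_div_sub_sq {y t : ℝ} (hy : 0 < y) (ht : 0 < t) :
    HasDerivAt (fun t => t * log (t / y) - t + y - (t - y) ^ 2 / 2)
      (log (t / y) - (t - y)) t := by
  have hlog := ((hasDerivAt_id t).div_const y).log (div_pos ht hy).ne'
  have := ((((hasDerivAt_id t).mul hlog).sub (hasDerivAt_id t)).add_const y).sub
    ((((hasDerivAt_id t).sub_const y).pow 2).div_const 2)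
  refine this.congr_deriv ?_
  simp only [id]
  field_simp
  ring

lemma sub_le_log_div {t y : ℝ} (hy : 0 < y) (hyt : y ≤ t) (ht1 : t ≤ 1) :
    t - y ≤ log (t / y) := by
  have ht : 0 < t := hy.trans_le hyt
  calc t - y ≤ (t - y) / t := le_div_self (by linarith) ht ht1
    _ = 1 - (t / y)⁻¹ := by field_simp
    _ ≤ log (t / y) := one_sub_inv_le_log_of_pos (div_pos ht hy)

lemma log_div_le_sub {t y : ℝ} (ht : 0 < t) (hty : t ≤ y) (hy1 : y ≤ 1) :
    log (t / y) ≤ t - y := by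
  have hy : 0 < y := ht.trans_le hty
  calc log (t / y) ≤ t / y - 1 := log_le_sub_one_of_pos (div_pos ht hy)
    _ = (t - y) / y := by field_simp
    _ ≤ t - y := by rw [div_le_iff₀ hy]; nlinarith

theorem sq_sub_div_two_le_mul_log_div {x y : ℝ} (hx : 0 < x) (hx1 : x ≤ 1) (hy : 0 < y)
    (hy1 : y ≤ 1) : (x - y) ^ 2 / 2 ≤ x * log (x / y) - x + y := by
  -- `f y = 0`, and `f'` has the sign of `t - y` on `(0, 1]`
  set f : ℝ → ℝ := fun t => t * log (t / y) - t + y - (t - y) ^ 2 / 2 with hf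
  have hfy : f y = 0 := by simp [hf, div_self hy.ne']
  have hderiv : ∀ t ∈ Set.Ioi (0 : ℝ), HasDerivAt f (log (t / y) - (t - y)) t :=
    fun t ht => hasDerivAt_mul_log_div_sub_sq hy ht
  have hcont : ∀ {u v : ℝ}, 0 < u → ContinuousOn f (Set.Icc u v) := fun hu t ht =>
    (hderiv t (hu.trans_le ht.1)).continuousAt.continuousWithinAt
  suffices 0 ≤ f x by simp only [hf] at this; linarith
  rcases le_total y x with hyx | hxy
  · have hmono : MonotoneOn f (Set.Icc y 1) := by
      refine monotoneOn_of_hasDerivWithinAt_nonneg (convex_Icc y 1) (hcont hy)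
        (fun t ht => (hderiv t ?_).hasDerivWithinAt) fun t ht => ?_
      · rw [interior_Icc] at ht; exact hy.trans ht.1
      · rw [interior_Icc] at ht
        linarith [sub_le_log_div hy ht.1.le ht.2.le]
    simpa [hfy] using hmono ⟨le_rfl, hy1⟩ ⟨hyx, hx1⟩ hyx
  · have hanti : AntitoneOn f (Set.Icc x y) := by
      refine antitoneOn_of_hasDerivWithinAt_nonpos (convex_Icc x y) (hcont hx)
        (fun t ht => (hderiv t ?_).hasDerivWithinAt) fun t ht => ?_
      · rw [interior_Icc] at ht; exact hx.trans ht.1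
      · rw [interior_Icc] at ht
        linarith [log_div_le_sub (hx.trans ht.1) ht.2.le hy1]
    simpa [hfy] using hanti ⟨le_rfl, hxy⟩ ⟨hxy, le_rfl⟩ hxy

variable {ι : Type*} [Fintype ι]

noncomputable def normalized (x : ι → ℝ) (i : ι) : ℝ := x i / ∑ j, x j

noncomputable def negEntropy (x : ι → ℝ) : ℝ := ∑ i, x i * log (normalized x i)

noncomputable def klDiv (p q : ι → ℝ) : ℝ := ∑ i, p i * log (p i / q i)

lemma normalized_pos {x : ι → ℝ} (hx : ∀ i, 0 < x i) (i : ι) : 0 < normalized x i :=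
  div_pos (hx i) (sum_pos (fun j _ => hx j) ⟨i, mem_univ i⟩)

lemma sum_mul_normalized {x : ι → ℝ} (hx : ∀ i, 0 < x i) (i : ι) :
    (∑ j, x j) * normalized x i = x i :=
  mul_div_cancel₀ _ (sum_pos (fun j _ => hx j) ⟨i, mem_univ i⟩).ne'

lemma sum_normalized {x : ι → ℝ} (hx : ∑ j, x j ≠ 0) : ∑ i, normalized x i = 1 := by
  simp only [normalized, ← sum_div, div_self hx]

theorem sum_sq_sub_div_two_le_klDiv {p q : ι → ℝ} (hp : ∀ i, 0 < p i) (hq : ∀ i, 0 < q i)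
    (hp1 : ∑ i, p i = 1) (hq1 : ∑ i, q i = 1) : (∑ i, (p i - q i) ^ 2) / 2 ≤ klDiv p q := by
  have le_one {r : ι → ℝ} (hr : ∀ i, 0 < r i) (hr1 : ∑ i, r i = 1) (i : ι) : r i ≤ 1 :=
    hr1 ▸ single_le_sum (fun j _ => (hr j).le) (mem_univ i)
  calc (∑ i, (p i - q i) ^ 2) / 2
      ≤ ∑ i, (p i * log (p i / q i) - p i + q i) := by
        rw [sum_div]
        exact sum_le_sum fun i _ =>
          sq_sub_div_two_le_mul_log_div (hp i) (le_one hp hp1 i) (hq i) (le_one hq hq1 i)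
    _ = klDiv p q := by rw [sum_add_distrib, sum_sub_distrib, hp1, hq1, klDiv, sub_add_cancel]

theorem negEntropy_convexity_gap_eq {x y z : ι → ℝ} (hx : ∀ i, 0 < x i) (hy : ∀ i, 0 < y i)
    (hz : ∀ i, 0 < z i) {α : ℝ} (hxyz : ∀ i, z i = α * x i + (1 - α) * y i) :
    α * negEntropy x + (1 - α) * negEntropy y - negEntropy z =
      α * (∑ i, x i) * klDiv (normalized x) (normalized z) +
      (1 - α) * (∑ i, y i) * klDiv (normalized y) (normalized z) := by
  have hX := sum_mul_normalized hx
  have hY := sum_mul_normalized hy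
  set X := ∑ j, x j
  set Y := ∑ j, y j
  simp only [negEntropy, klDiv, mul_sum, ← sum_add_distrib, ← sum_sub_distrib]
  refine sum_congr rfl fun i _ => ?_
  rw [log_div (normalized_pos hx i).ne' (normalized_pos hz i).ne',
    log_div (normalized_pos hy i).ne' (normalized_pos hz i).ne']
  linear_combination (-α * (log (normalized x i) - log (normalized z i))) * hX i -
    ((1 - α) * (log (normalized y i) - log (normalized z i))) * hY i -
    log (normalized z i) * hxyz i

lemma convexComb_pos {a b α : ℝ} (ha : 0 < a) (hb : 0 < b) (hα0 : 0 ≤ α) (hα1 : α ≤ 1) :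
    0 < α * a + (1 - α) * b :=
  convex_Ioi (0 : ℝ) ha hb hα0 (sub_nonneg.2 hα1) (add_sub_cancel α 1)

lemma le_mul_div_convexComb {X Y D α : ℝ} (hX : 0 < X) (hY : 0 < Y) (hDX : D ≤ X) (hDY : D ≤ Y)
    (hα0 : 0 ≤ α) (hα1 : α ≤ 1) : D ≤ X * Y / (α * X + (1 - α) * Y) := by
  rw [le_div_iff₀ (convexComb_pos hX hY hα0 hα1)]
  nlinarith [mul_le_mul_of_nonneg_left hDY (mul_nonneg hα0 hX.le),
    mul_le_mul_of_nonneg_left hDX (mul_nonneg (sub_nonneg.2 hα1) hY.le)]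

lemma sum_of_convexComb {x y z : ι → ℝ} {α : ℝ}
    (hxyz : ∀ i, z i = α * x i + (1 - α) * y i) :
    ∑ i, z i = α * ∑ i, x i + (1 - α) * ∑ i, y i := by
  simp only [hxyz, sum_add_distrib, mul_sum]

lemma normalized_sub_of_convexComb {x y z : ι → ℝ} {α : ℝ}
    (hxyz : ∀ i, z i = α * x i + (1 - α) * y i) (hx : ∀ i, 0 < x i) (hy : ∀ i, 0 < y i)
    (hα0 : 0 ≤ α) (hα1 : α ≤ 1) (i : ι) :
    normalized x i - normalized z i =
      (1 - α) * (∑ j, y j) / (∑ j, z j) * (normalized x i - normalized y i) := by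
  have hX := sum_pos (fun j _ => hx j) ⟨i, mem_univ i⟩
  have hY := sum_pos (fun j _ => hy j) ⟨i, mem_univ i⟩
  have hZ := (convexComb_pos hX hY hα0 hα1).ne'
  simp only [normalized, hxyz i, sum_of_convexComb hxyz]
  rw [div_sub_div _ _ hX.ne' hZ, div_sub_div _ _ hX.ne' hY.ne', div_mul_div_comm,
    div_eq_div_iff (mul_ne_zero hX.ne' hZ) (mul_ne_zero hZ (mul_ne_zero hX.ne' hY.ne'))]
  ring

lemma sum_sq_normalized_sub_of_convexComb {x y z : ι → ℝ} {α : ℝ}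
    (hxyz : ∀ i, z i = α * x i + (1 - α) * y i) (hx : ∀ i, 0 < x i) (hy : ∀ i, 0 < y i)
    (hα0 : 0 ≤ α) (hα1 : α ≤ 1) :
    ∑ i, (normalized x i - normalized z i) ^ 2 =
      ((1 - α) * (∑ j, y j) / ∑ j, z j) ^ 2 * ∑ i, (normalized x i - normalized y i) ^ 2 := by
  simp only [normalized_sub_of_convexComb hxyz hx hy hα0 hα1, mul_pow, ← mul_sum]

theorem mul_sum_sq_sub_normalized_le_negEntropy_gap [Nonempty ι] {x y z : ι → ℝ} {D α : ℝ}
    (hx : ∀ i, 0 < x i) (hy : ∀ i, 0 < y i) (hDx : D ≤ ∑ i, x i) (hDy : D ≤ ∑ i, y i)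
    (hα0 : 0 ≤ α) (hα1 : α ≤ 1) (hxyz : ∀ i, z i = α * x i + (1 - α) * y i) :
    D * α * (1 - α) / 2 * ∑ i, (normalized x i - normalized y i) ^ 2 ≤
      α * negEntropy x + (1 - α) * negEntropy y - negEntropy z := by
  have hz (i : ι) : 0 < z i := hxyz i ▸ convexComb_pos (hx i) (hy i) hα0 hα1
  have hzyx (i : ι) : z i = (1 - α) * y i + (1 - (1 - α)) * x i := by rw [hxyz]; ring
  have hsum_pos {w : ι → ℝ} (hw : ∀ i, 0 < w i) : 0 < ∑ i, w i :=
    sum_pos (fun i _ => hw i) univ_nonempty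
  have hkl {w : ι → ℝ} (hw : ∀ i, 0 < w i) :=
    sum_sq_sub_div_two_le_klDiv (normalized_pos hw) (normalized_pos hz)
      (sum_normalized (hsum_pos hw).ne') (sum_normalized (hsum_pos hz).ne')
  have hsq_x := sum_sq_normalized_sub_of_convexComb hxyz hx hy hα0 hα1
  have hsq_y := sum_sq_normalized_sub_of_convexComb hzyx hy hx (sub_nonneg.2 hα1)
    (sub_le_self 1 hα0)
  simp only [sub_sq_comm (normalized y _) (normalized x _), sub_sub_cancel] at hsq_y
  have hX := hsum_pos hx
  have hY := hsum_pos hy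
  rw [sum_of_convexComb hxyz] at hsq_x hsq_y
  calc D * α * (1 - α) / 2 * ∑ i, (normalized x i - normalized y i) ^ 2
      ≤ (∑ i, x i) * (∑ i, y i) / (α * (∑ i, x i) + (1 - α) * ∑ i, y i) * α * (1 - α) / 2 *
          ∑ i, (normalized x i - normalized y i) ^ 2 := by
        have := le_mul_div_convexComb hX hY hDx hDy hα0 hα1
        have := sub_nonneg.2 hα1
        gcongr
    _ = α * (∑ i, x i) * ((∑ i, (normalized x i - normalized z i) ^ 2) / 2) +
        (1 - α) * (∑ i, y i) * ((∑ i, (normalized y i - normalized z i) ^ 2) / 2) := by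
        have hZ := (convexComb_pos hX hY hα0 hα1).ne'
        rw [hsq_x, hsq_y]
        generalize hZ_def : α * (∑ i, x i) + (1 - α) * ∑ i, y i = Z at hZ ⊢
        field_simp
        rw [← hZ_def]
        ring
    _ ≤ α * (∑ i, x i) * klDiv (normalized x) (normalized z) +
        (1 - α) * (∑ i, y i) * klDiv (normalized y) (normalized z) := by
        have := sub_nonneg.2 hα1
        gcongr
        exacts [hkl hx, hkl hy]
    _ = α * negEntropy x + (1 - α) * negEntropy y - negEntropy z :=
        (negEntropy_convexity_gap_eq hx hy hz hxyz).symm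

end

theorem entropy_strong_convexity_general
    {S A : Type*} [Fintype S] [Fintype A] [Nonempty A]
    (D : ℝ)
    (d₀ d₁ : S → A → ℝ) (hd₀ : ∀ s a, 0 < d₀ s a) (hd₁ : ∀ s a, 0 < d₁ s a)
    (hD₀ : ∀ s, D ≤ ∑ a, d₀ s a) (hD₁ : ∀ s, D ≤ ∑ a, d₁ s a)
    (α : ℝ) (hα0 : 0 ≤ α) (hα1 : α ≤ 1)
    (dα : S → A → ℝ) (hdα : ∀ s a, dα s a = α * d₁ s a + (1 - α) * d₀ s a)
    (π₀ π₁ : S → A → ℝ)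
    (hπ₀ : ∀ s a, π₀ s a = d₀ s a / ∑ a', d₀ s a')
    (hπ₁ : ∀ s a, π₁ s a = d₁ s a / ∑ a', d₁ s a')
    (H : (S → A → ℝ) → ℝ)
    (hH : ∀ d : S → A → ℝ, H d = ∑ s, ∑ a, d s a * Real.log (d s a / ∑ a', d s a')) :
    D * α * (1 - α) / 2 * ∑ s, ∑ a, (π₁ s a - π₀ s a) ^ 2 ≤
      α * H d₁ + (1 - α) * H d₀ - H dα := by
  have hH' (d : S → A → ℝ) : H d = ∑ s, negEntropy (d s) := hH d
  have hπ (s : S) (a : A) : π₁ s a - π₀ s a = normalized (d₁ s) a - normalized (d₀ s) a := by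
    rw [hπ₀, hπ₁]; rfl
  simp only [hH', hπ]
  rw [mul_sum, mul_sum, mul_sum, ← sum_add_distrib, ← sum_sub_distrib]
  exact sum_le_sum fun s _ => mul_sum_sq_sub_normalized_le_negEntropy_gap (hd₁ s) (hd₀ s)
    (hD₁ s) (hD₀ s) hα0 hα1 (hdα s)

/-- strong convexity of the negative conditional entropy
`H(d) = Σ_{s,a} d(s,a) log(d(s,a)/d(s))` as a function of the occupancy measure: if both
state marginals are at least `D > 0`, then
`α H(d₁) + (1−α) H(d₀) − H(d_α) ≥ (D α (1−α)/2) Σ_{s,a} (π₁(a|s) − π₀(a|s))²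
  = (D α (1−α)/2) ‖π₁ − π₀‖²`. -/
theorem entropy_strong_convexity
    {S A : Type*} [Fintype S] [Fintype A] [Nonempty S] [Nonempty A]
    (D : ℝ) (hD : 0 < D)
    (d₀ d₁ : S → A → ℝ) (hd₀ : ∀ s a, 0 < d₀ s a) (hd₁ : ∀ s a, 0 < d₁ s a)
    (hD₀ : ∀ s, D ≤ ∑ a, d₀ s a) (hD₁ : ∀ s, D ≤ ∑ a, d₁ s a)
    (α : ℝ) (hα0 : 0 ≤ α) (hα1 : α ≤ 1)
    (dα : S → A → ℝ) (hdα : ∀ s a, dα s a = α * d₁ s a + (1 - α) * d₀ s a)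
    (π₀ π₁ : S → A → ℝ)
    (hπ₀ : ∀ s a, π₀ s a = d₀ s a / ∑ a', d₀ s a')
    (hπ₁ : ∀ s a, π₁ s a = d₁ s a / ∑ a', d₁ s a')
    (H : (S → A → ℝ) → ℝ)
    (hH : ∀ d : S → A → ℝ, H d = ∑ s, ∑ a, d s a * Real.log (d s a / ∑ a', d s a')) :
    D * α * (1 - α) / 2 * ∑ s, ∑ a, (π₁ s a - π₀ s a) ^ 2 ≤
      α * H d₁ + (1 - α) * H d₀ - H dα :=
  entropy_strong_convexity_general D d₀ d₁ hd₀ hd₁ hD₀ hD₁ α hα0 hα1 dα hdα π₀ π₁ hπ₀ hπ₁ H hH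
end

section
/- Let d₀, d₁ : S × A → ℝ be strictly positive with state marginals d_i(s) = Σ_a d_i(s,a), and set π_i(a|s) = d_i(s,a)/d_i(s). For α ∈ [0,1] let d_α(s) = α d₁(s) + (1−α) d₀(s) and π_α(a|s) = (α d₁(s,a) + (1−α) d₀(s,a))/d_α(s). Then the following identity holds: (1/2) Σ_s [ α d₁(s) (Σ_a |π₁(a|s) − π_α(a|s)|)² + (1−α) d₀(s) (Σ_a |π₀(a|s) − π_α(a|s)|)² ] = (α(1−α)/2) Σ_s (d₀(s) d₁(s)/d_α(s)) (Σ_a |π₁(a|s) − π₀(a|s)|)². -/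
open Finset

/-!
With weights `u = α d₁(s)` and `v = (1 - α) d₀(s)`, the mixture conditional is
`π_α = (u π₁ + v π₀) / (u + v)`, so `π₁ - π_α = v (π₁ - π₀) / (u + v)` and
`π₀ - π_α = u (π₀ - π₁) / (u + v)`. Both ℓ₁ deviations are therefore proportional to
`Σ_a |π₁ - π₀|`, and `u v² + v u² = u v (u + v)` gives the identity state by state.
-/

lemma sub_weighted_mean_eq (u v x y : ℝ) (h : u + v ≠ 0) :
    x - (u * x + v * y) / (u + v) = v / (u + v) * (x - y) := by
  field_simp
  ring

section WeightedMean

variable {A : Type*} [Fintype A]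

lemma sum_abs_sub_weighted_mean (u v : ℝ) (h : u + v ≠ 0) (p q : A → ℝ) :
    ∑ a, |p a - (u * p a + v * q a) / (u + v)| = |v / (u + v)| * ∑ a, |p a - q a| := by
  simp_rw [sub_weighted_mean_eq u v _ _ h, abs_mul, mul_sum]

lemma weighted_sq_l1_dist_to_weighted_mean (u v : ℝ) (h : u + v ≠ 0) (p q : A → ℝ) :
    u * (∑ a, |p a - (u * p a + v * q a) / (u + v)|) ^ 2 +
        v * (∑ a, |q a - (u * p a + v * q a) / (u + v)|) ^ 2 =
      u * v / (u + v) * (∑ a, |p a - q a|) ^ 2 := by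
  have hq : ∑ a, |q a - (u * p a + v * q a) / (u + v)| = |u / (u + v)| * ∑ a, |p a - q a| := by
    simp_rw [add_comm (u * p _), add_comm u v]
    rw [sum_abs_sub_weighted_mean v u (by rwa [add_comm]) q p]
    simp_rw [abs_sub_comm (q _)]
  rw [sum_abs_sub_weighted_mean u v h, hq, mul_pow, mul_pow, sq_abs, sq_abs]
  field_simp
  ring

end WeightedMean

theorem mixture_conditional_l1_identity_general
    {S A : Type*} [Fintype S] [Fintype A] [Nonempty A]
    (d₀ d₁ : S → A → ℝ) (hd₀ : ∀ s a, 0 < d₀ s a) (hd₁ : ∀ s a, 0 < d₁ s a)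
    (α : ℝ) (hα0 : 0 ≤ α) (hα1 : α ≤ 1)
    (π₀ π₁ πα : S → A → ℝ)
    (hπ₀ : ∀ s a, π₀ s a = d₀ s a / ∑ a', d₀ s a')
    (hπ₁ : ∀ s a, π₁ s a = d₁ s a / ∑ a', d₁ s a')
    (dαs : S → ℝ)
    (hdαs : ∀ s, dαs s = α * (∑ a, d₁ s a) + (1 - α) * (∑ a, d₀ s a))
    (hπα : ∀ s a, πα s a = (α * d₁ s a + (1 - α) * d₀ s a) / dαs s) :
    1 / 2 * ∑ s, (α * (∑ a, d₁ s a) * (∑ a, |π₁ s a - πα s a|) ^ 2 +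
        (1 - α) * (∑ a, d₀ s a) * (∑ a, |π₀ s a - πα s a|) ^ 2) =
      α * (1 - α) / 2 * ∑ s, ((∑ a, d₀ s a) * (∑ a, d₁ s a) / dαs s) *
        (∑ a, |π₁ s a - π₀ s a|) ^ 2 := by
  have per_state : ∀ s, α * (∑ a, d₁ s a) * (∑ a, |π₁ s a - πα s a|) ^ 2 +
      (1 - α) * (∑ a, d₀ s a) * (∑ a, |π₀ s a - πα s a|) ^ 2 =
      α * (1 - α) * ((∑ a, d₀ s a) * (∑ a, d₁ s a) / dαs s * (∑ a, |π₁ s a - π₀ s a|) ^ 2) := by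
    intro s
    have hD₀ : 0 < ∑ a, d₀ s a := sum_pos (fun a _ ↦ hd₀ s a) univ_nonempty
    have hD₁ : 0 < ∑ a, d₁ s a := sum_pos (fun a _ ↦ hd₁ s a) univ_nonempty
    have hdα : α * (∑ a, d₁ s a) + (1 - α) * (∑ a, d₀ s a) ≠ 0 := ne_of_gt <| by
      nlinarith [mul_nonneg hα0 hD₁.le, mul_nonneg (sub_nonneg.mpr hα1) hD₀.le]
    have hπα_mean : ∀ a, πα s a = (α * (∑ a, d₁ s a) * π₁ s a + (1 - α) * (∑ a, d₀ s a) * π₀ s a) /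
        (α * (∑ a, d₁ s a) + (1 - α) * (∑ a, d₀ s a)) := by
      intro a
      rw [hπα, hdαs, hπ₀, hπ₁, mul_assoc, mul_div_cancel₀ _ hD₁.ne', mul_assoc,
        mul_div_cancel₀ _ hD₀.ne']
    simp_rw [hπα_mean, weighted_sq_l1_dist_to_weighted_mean _ _ hdα, hdαs]
    ring
  rw [sum_congr rfl fun s _ ↦ per_state s, ← mul_sum]
  ring

/-- the weighted ℓ₁ deviations of the conditionals from the mixture
conditional satisfy the identity
`(1/2) Σ_s [α d₁(s)(Σ_a|π₁−π_α|)² + (1−α) d₀(s)(Σ_a|π₀−π_α|)²]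
  = (α(1−α)/2) Σ_s (d₀(s)d₁(s)/d_α(s)) (Σ_a|π₁−π₀|)²`. -/
theorem mixture_conditional_l1_identity
    {S A : Type*} [Fintype S] [Fintype A] [Nonempty S] [Nonempty A]
    (d₀ d₁ : S → A → ℝ) (hd₀ : ∀ s a, 0 < d₀ s a) (hd₁ : ∀ s a, 0 < d₁ s a)
    (α : ℝ) (hα0 : 0 ≤ α) (hα1 : α ≤ 1)
    (π₀ π₁ πα : S → A → ℝ)
    (hπ₀ : ∀ s a, π₀ s a = d₀ s a / ∑ a', d₀ s a')
    (hπ₁ : ∀ s a, π₁ s a = d₁ s a / ∑ a', d₁ s a')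
    (dαs : S → ℝ)
    (hdαs : ∀ s, dαs s = α * (∑ a, d₁ s a) + (1 - α) * (∑ a, d₀ s a))
    (hπα : ∀ s a, πα s a = (α * d₁ s a + (1 - α) * d₀ s a) / dαs s) :
    1 / 2 * ∑ s, (α * (∑ a, d₁ s a) * (∑ a, |π₁ s a - πα s a|) ^ 2 +
        (1 - α) * (∑ a, d₀ s a) * (∑ a, |π₀ s a - πα s a|) ^ 2) =
      α * (1 - α) / 2 * ∑ s, ((∑ a, d₀ s a) * (∑ a, d₁ s a) / dαs s) *
        (∑ a, |π₁ s a - π₀ s a|) ^ 2 :=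
  mixture_conditional_l1_identity_general d₀ d₁ hd₀ hd₁ α hα0 hα1 π₀ π₁ πα hπ₀ hπ₁ dαs hdαs hπα
end
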